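/- If T is self-adjoint, then for every n ≥ 2, ker(I - T̃)ⁿ = ker(I-T) ⊕ ker(I-T) = {(f,g) : f, g ∈ ker(I - T)}; in particular the generalized eigenspace of T̃ at 1 stabilizes at n = 2. -/

import Mathlib

/-!
Write `S = 1 - T̃`, so `S (f, g) = (f + g, g - f - 2 T g)`. A direct computation shows that
`S² (f, g) = 0` exactly when `T f = f` and `T g = g`. If moreover `S³ ψ = 0` with `ψ = (f, g)`,
then `S ψ ∈ ker S²`, which yields `(T - 1)² g = 0`. A self-adjoint operator has no nontrivial
Jordan blocks, so `T g = g`, and then `T f = f`: hence `ker S³ = ker S²`, and the kernels of the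
powers of `S` are constant from `n = 2` on.
-/

open Module End

namespace Module.End

variable {K V : Type*} [Field K] [AddCommGroup V] [Module K V]

/-- The operator `T̃ (f, g) = (-g, f + 2 T g)`, i.e. the companion matrix `[[0, -1], [1, 2T]]` of
`λ² - 2Tλ + 1`. -/
def companion (T : End K V) : End K (V × V) :=
  (-LinearMap.snd K V V).prod (LinearMap.fst K V V + (2 : K) • T ∘ₗ LinearMap.snd K V V)

@[simp]
lemma companion_apply (T : End K V) (f g : V) : companion T (f, g) = (-g, f + (2 : K) • T g) := by
  simp [companion]

lemma one_sub_companion_apply (T : End K V) (f g : V) :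
    (1 - companion T) (f, g) = (f + g, g - f - (2 : K) • T g) := by
  ext <;> simp; abel

variable [NeZero (2 : K)] {T : End K V}

lemma ker_one_sub_companion_sq :
    LinearMap.ker ((1 - companion T) ^ 2) = (eigenspace T 1).prod (eigenspace T 1) := by
  ext ⟨f, g⟩
  simp only [LinearMap.mem_ker, pow_two, Module.End.mul_apply, one_sub_companion_apply,
    Submodule.mem_prod, mem_eigenspace_iff, one_smul, Prod.mk_eq_zero, map_sub, map_smul]
  constructor
  · rintro ⟨h1, h2⟩
    have hg : T g = g := by
      have : (2 : K) • (g - T g) = 0 := by linear_combination (norm := module) h1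
      exact (sub_eq_zero.mp ((smul_eq_zero_iff_right (two_ne_zero' K)).mp this)).symm
    refine ⟨?_, hg⟩
    simp only [hg] at h2
    have : (2 : K) • (T f - f) = 0 := by linear_combination (norm := module) h2
    exact sub_eq_zero.mp ((smul_eq_zero_iff_right (two_ne_zero' K)).mp this)
  · rintro ⟨hf, hg⟩
    simp only [hf, hg]
    constructor <;> module

lemma ker_one_sub_companion_pow_three_eq_pow_two (hT : genEigenspace T 1 2 = eigenspace T 1) :
    LinearMap.ker ((1 - companion T) ^ 3) = LinearMap.ker ((1 - companion T) ^ 2) := by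
  refine le_antisymm (fun ψ hψ ↦ ?_) ?_
  obtain ⟨f, g⟩ := ψ
  have hSψ : (1 - companion T) (f, g) ∈ LinearMap.ker ((1 - companion T) ^ 2) := by
    rwa [LinearMap.mem_ker, ← mul_apply, ← pow_succ]
  simp only [ker_one_sub_companion_sq, one_sub_companion_apply, Submodule.mem_prod,
    mem_eigenspace_iff, one_smul, map_add, map_sub, map_smul] at hSψ ⊢
  obtain ⟨hu, hv⟩ := hSψ
  have hg : T g = g := by
    have : g ∈ genEigenspace T 1 (2 : ℕ) := by
      simp only [mem_genEigenspace_nat, LinearMap.mem_ker, one_smul, pow_two, mul_apply,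
        LinearMap.sub_apply, one_apply, map_sub]
      have h : (2 : K) • (T (T g) - T g - (T g - g)) = 0 := by
        linear_combination (norm := module) (-1 : K) • (hu + hv)
      exact (smul_eq_zero_iff_right (two_ne_zero' K)).mp h
    simpa [hT] using this
  · exact ⟨by rw [hg] at hu; exact add_right_cancel hu, hg⟩
  · rw [pow_succ', mul_eq_comp]
    exact LinearMap.ker_le_ker_comp ((1 - companion T) ^ 2) (1 - companion T)

lemma ker_one_sub_companion_pow (hT : genEigenspace T 1 2 = eigenspace T 1) {n : ℕ}
    (hn : 2 ≤ n) :
    LinearMap.ker ((1 - companion T) ^ n) = (eigenspace T 1).prod (eigenspace T 1) := by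
  obtain ⟨m, rfl⟩ := Nat.exists_eq_add_of_le hn
  rw [← ker_pow_constant (ker_one_sub_companion_pow_three_eq_pow_two hT).symm m,
    ker_one_sub_companion_sq]

end Module.End

open ContinuousLinearMap

theorem stmt13 {K₁ : Type*}
    [NormedAddCommGroup K₁] [InnerProductSpace ℂ K₁] [FiniteDimensional ℂ K₁]
    (T : K₁ →L[ℂ] K₁) (hT : IsSelfAdjoint T)
    (Ttil : K₁ × K₁ →L[ℂ] K₁ × K₁)
    (hTtil : ∀ f g : K₁, Ttil (f, g) = (-g, f + (2:ℂ) • T g)) :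
    ∀ n : ℕ, 2 ≤ n →
      {ψ : K₁ × K₁ | ((1 - Ttil) ^ n) ψ = 0}
        = {ψ : K₁ × K₁ | T ψ.1 = ψ.1 ∧ T ψ.2 = ψ.2} := by
  intro n hn
  have hTtil' : (Ttil : End ℂ (K₁ × K₁)) = companion (T : End ℂ K₁) :=
    LinearMap.ext fun ψ ↦ hTtil ψ.1 ψ.2
  have hker := ker_one_sub_companion_pow
    (hT.isSymmetric.isFinitelySemisimple.genEigenspace_eq_eigenspace 1 (by norm_num)) hn
  rw [← hTtil', ← toLinearMap_one, ← toLinearMap_sub, ← toLinearMap_pow] at hker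
  ext ψ
  simpa only [Set.mem_ofPred_eq, LinearMap.mem_ker, coe_coe, Submodule.mem_prod,
    mem_eigenspace_iff, one_smul] using SetLike.ext_iff.mp hker ψ
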